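/- arXiv:2110.11399 — 2 statements merged into one kernel-verified Lean document; each statement's English description precedes it below -/
import Mathlib

section
/- For 2×2 column-stochastic matrices A, B with A − B of rank at most 1 (which holds automatically), and column-stochastic M, the inequality ‖MA − MB‖ ≤ ‖A − B‖ holds in the spectral norm. -/
open Matrix

def ColStoch {n : ℕ} (A : Matrix (Fin n) (Fin n) ℝ) : Prop :=
  (∀ i j, 0 ≤ A i j ∧ A i j ≤ 1) ∧ ∀ j, ∑ i, A i j = 1

/-- Spectral norm: operator norm induced by the Euclidean vector norm. -/
noncomputable def specNorm {n : ℕ} (A : Matrix (Fin n) (Fin n) ℝ) : ℝ :=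
  ‖LinearMap.toContinuousLinearMap (Matrix.toEuclideanLin A)‖

theorem stmt_8 (A B M : Matrix (Fin 2) (Fin 2) ℝ)
    (hA : ColStoch A) (hB : ColStoch B) (hM : ColStoch M) :
    (A - B).rank ≤ 1 ∧ specNorm (M * A - M * B) ≤ specNorm (A - B) := by
  obtain ⟨hA1, hA2⟩ := hA
  obtain ⟨hB1, hB2⟩ := hB
  obtain ⟨hM1, hM2⟩ := hM
  have hcol : ∀ j, A 1 j - B 1 j = -(A 0 j - B 0 j) := by
    intro j
    have h1 := hA2 j
    have h2 := hB2 j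
    simp [Fin.sum_univ_two] at h1 h2
    linarith
  have hfact : A - B = vecMulVec ![1, -1] (fun j => A 0 j - B 0 j) := by
    ext i j
    fin_cases i <;> simp [vecMulVec_apply, hcol j]
  constructor
  · rw [hfact, vecMulVec_eq (Fin 1)]
    refine (Matrix.rank_mul_le_left _ _).trans ?_
    exact (Matrix.rank_le_card_width (R := ℝ)
      (Matrix.replicateCol (Fin 1) (![1, -1] : Fin 2 → ℝ))).trans (by simp)
  · have hMrow : ∀ k, M 1 k = 1 - M 0 k := by
      intro k
      have := hM2 k
      simp [Fin.sum_univ_two] at this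
      linarith
    set c : ℝ := M 0 0 - M 0 1 with hc
    have hsmul : M * A - M * B = c • (A - B) := by
      ext i j
      have h := hcol j
      simp only [Matrix.sub_apply, Matrix.mul_apply, Fin.sum_univ_two,
        Matrix.smul_apply, smul_eq_mul]
      fin_cases i <;> simp only [Fin.zero_eta, Fin.mk_one, Fin.isValue]
      · linear_combination M 0 1 * h
      · rw [hMrow 0, hMrow 1]
        linear_combination (1 - M 0 0) * h
    rw [hsmul]
    have hcb : |c| ≤ 1 := by
      have h1 := hM1 0 0
      have h2 := hM1 0 1
      rw [abs_le]; constructor <;> [linarith; linarith]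
    calc specNorm (c • (A - B))
        = |c| * specNorm (A - B) := by
          simp only [specNorm, _root_.map_smul]
          rw [norm_smul c (LinearMap.toContinuousLinearMap (toEuclideanLin (A - B))),
            Real.norm_eq_abs]
      _ ≤ 1 * specNorm (A - B) := by
          apply mul_le_mul_of_nonneg_right hcb (norm_nonneg _)
      _ = specNorm (A - B) := one_mul _
end

section
/- Let A = [[a₁, 1−a₂],[1−a₁, a₂]] with a₁, a₂ ∈ [1/2, 1], and let Γ = [[γ₁, γ₂],[1−γ₁, 1−γ₂]] with γ₁, γ₂ ∈ [0,1], and set B = ΓA. Then ‖I − A‖_∞ ≤ ‖I − B‖_∞, where ‖·‖_∞ is the maximum absolute row sum. -/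
open Matrix

/-- The infinity norm (maximum absolute row sum) of a 2×2 real matrix. -/
def infNorm2 (X : Matrix (Fin 2) (Fin 2) ℝ) : ℝ :=
  max (|X 0 0| + |X 0 1|) (|X 1 0| + |X 1 1|)

theorem stmt_10 (a₁ a₂ γ₁ γ₂ : ℝ)
    (ha₁ : a₁ ∈ Set.Icc (1 / 2 : ℝ) 1) (ha₂ : a₂ ∈ Set.Icc (1 / 2 : ℝ) 1)
    (hγ₁ : γ₁ ∈ Set.Icc (0 : ℝ) 1) (hγ₂ : γ₂ ∈ Set.Icc (0 : ℝ) 1) :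
    infNorm2 (1 - !![a₁, 1 - a₂; 1 - a₁, a₂]) ≤
      infNorm2 (1 - !![γ₁, γ₂; 1 - γ₁, 1 - γ₂] * !![a₁, 1 - a₂; 1 - a₁, a₂]) := by
  obtain ⟨h1, h2⟩ := ha₁
  obtain ⟨h3, h4⟩ := ha₂
  obtain ⟨h5, h6⟩ := hγ₁
  obtain ⟨h7, h8⟩ := hγ₂
  simp only [infNorm2, Matrix.mul_apply, Fin.sum_univ_two, Matrix.sub_apply,
    Matrix.one_apply, Matrix.cons_val', Matrix.cons_val_zero, Matrix.cons_val_one,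
    Matrix.head_cons, Matrix.head_fin_const, Matrix.empty_val', Matrix.cons_val_fin_one]
  norm_num
  rw [abs_of_nonneg (by linarith : (0:ℝ) ≤ 1 - a₁), abs_of_nonpos (by linarith : a₂ - 1 ≤ (0:ℝ)),
    abs_of_nonpos (by linarith : a₁ - 1 ≤ (0:ℝ)), abs_of_nonneg (by linarith : (0:ℝ) ≤ 1 - a₂)]
  left
  constructor <;>
    nlinarith [le_abs_self (1 - (γ₁ * a₁ + γ₂ * (1 - a₁))),
      neg_abs_le (-(γ₂ * a₂) + -(γ₁ * (1 - a₂))),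
      mul_nonneg (by linarith : (0:ℝ) ≤ γ₂ - γ₁ + 1) (by linarith : (0:ℝ) ≤ a₁ + a₂ - 1)]
end
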